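/- If X is a determining sequence for K, then (K(·,x_j))_{j∈ℕ} and (L_k)_{k∈ℕ} are dual Riesz bases of H_{K,X}; in particular every f ∈ H_{K,X} satisfies f = Σ_k ⟨f, L_k⟩_K K(·,x_k) = Σ_k ⟨f, K(·,x_k)⟩_K L_k, and the Gram matrix of (L_k) equals A_{K,X}^{-1}. -/

import Mathlib

open scoped RealInnerProductSpace

/-- A continuous symmetric kernel is positive definite if all kernel matrices
at finite sets of pairwise distinct points are (symmetric) positive definite. -/
def IsPDKernel {E : Type*} [TopologicalSpace E] (K : E → E → ℝ) : Prop :=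
  Continuous (fun p : E × E => K p.1 p.2) ∧ (∀ x y, K x y = K y x) ∧
  ∀ (n : ℕ) (x : Fin n → E), Function.Injective x →
    (Matrix.of fun i j => K (x i) (x j)).PosDef

/-- A family (v i) is a Riesz basis of the closed subspace S of a Hilbert space if it lies
in S and is the image of the canonical orthonormal basis of ℓ² under a bounded invertible
operator onto S. -/
def IsRieszBasisOf {ι H : Type*} [DecidableEq ι] [NormedAddCommGroup H]
    [InnerProductSpace ℝ H] (S : Submodule ℝ H) (v : ι → H) : Prop :=
  (∀ i, v i ∈ S) ∧
  ∃ T : (lp (fun _ : ι => ℝ) 2) ≃L[ℝ] S, ∀ i, (T (lp.single 2 i 1) : H) = v i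


/-!
Let `V : ℓ² → H`, `V c = ∑ cₙ vₙ`, be the synthesis operator of `vₙ = K(·, xₙ)`. On finite
sections `‖∑_{n ∈ s} cₙ vₙ‖² = ⟪c_s, T c_s⟫ ≤ ‖T‖ ‖c_s‖²`, so `V` is bounded, and then `V* V = T`:
the kernel matrix is the Gram operator of `V`. Invertibility of `T` makes `T⁻¹ V*` a left inverse
of `V`, so `V` is an isomorphism of `ℓ²` onto the closed span of the `vₙ`. The dual family
`L_k = V T⁻¹ e_k` is the image of the standard basis under the isomorphism `V T⁻¹`, and
`⟪V c, L_k⟫ = ⟪T T⁻¹ e_k, c⟫ = c_k` gives biorthogonality, the Gram matrix and the first expansion;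
the second one is `V T⁻¹` applied to `T c = ∑ (T c)_k e_k`.
-/

local notation "ℓ²(" ι ")" => lp (fun _ : ι => ℝ) 2

section lp

variable {ι E : Type*} [NormedAddCommGroup E] [NormedSpace ℝ E]

lemma lp.sum_sq_le_norm_sq (c : ℓ²(ι)) (s : Finset ι) : ∑ n ∈ s, c n ^ 2 ≤ ‖c‖ ^ 2 := by
  rw [← real_inner_self_eq_norm_sq]
  exact sum_le_hasSum s (fun n _ => sq_nonneg (c n))
    (by simpa [sq] using lp.hasSum_inner (𝕜 := ℝ) c c)

variable [DecidableEq ι]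

lemma lp.coeFn_sum_single (s : Finset ι) (c : ι → ℝ) :
    ⇑(∑ n ∈ s, lp.single 2 n (c n) : ℓ²(ι)) = fun m => if m ∈ s then c m else 0 := by
  ext m
  rw [lp.coeFn_sum, Finset.sum_apply]
  simp only [lp.coeFn_single, Finset.sum_pi_single]

lemma lp.norm_sum_single_sq (s : Finset ι) (c : ι → ℝ) :
    ‖(∑ n ∈ s, lp.single 2 n (c n) : ℓ²(ι))‖ ^ 2 = ∑ n ∈ s, c n ^ 2 := by
  have h := lp.norm_sum_single (p := 2) (by norm_num) c s
  simpa [Real.norm_eq_abs, sq_abs] using h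

lemma ContinuousLinearMap.hasSum_smul_apply_single (A : ℓ²(ι) →L[ℝ] E) (c : ℓ²(ι)) :
    HasSum (fun i => c i • A (lp.single 2 i 1)) (A c) := by
  have h := (lp.hasSum_single ENNReal.ofNat_ne_top c).mapL A
  simpa [← map_smul, ← lp.single_smul] using h

lemma isRieszBasisOf_of_equiv {H : Type*} [NormedAddCommGroup H] [InnerProductSpace ℝ H]
    {S : Submodule ℝ H} (E : ℓ²(ι) ≃L[ℝ] S) :
    IsRieszBasisOf S fun i => (E (lp.single 2 i 1) : H) :=
  ⟨fun _ => (E _).2, E, fun _ => rfl⟩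

end lp

section Gram

variable {ι H : Type*} [NormedAddCommGroup H] [InnerProductSpace ℝ H]

def IsGramOperator (v : ι → H) (T : ℓ²(ι) →L[ℝ] ℓ²(ι)) : Prop :=
  ∀ (c : ℓ²(ι)) (j : ι), HasSum (fun m => ⟪v j, v m⟫ * c m) (T c j)

namespace IsGramOperator

variable [DecidableEq ι] {v : ι → H}

section

variable {T : ℓ²(ι) →L[ℝ] ℓ²(ι)}

lemma apply_sum_single (hG : IsGramOperator v T) (s : Finset ι) (c : ι → ℝ) (j : ι) :
    T (∑ n ∈ s, lp.single 2 n (c n)) j = ∑ m ∈ s, ⟪v j, v m⟫ * c m := by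
  refine (hG _ j).unique ?_
  simp only [lp.coeFn_sum_single, mul_ite, mul_zero]
  have h := hasSum_sum_of_ne_finset_zero (L := SummationFilter.unconditional ι)
    (f := fun m => if m ∈ s then ⟪v j, v m⟫ * c m else 0) fun m hm => if_neg hm
  rwa [Finset.sum_congr rfl fun m hm => if_pos hm] at h

lemma norm_sum_smul_sq_le (hG : IsGramOperator v T) (s : Finset ι) (c : ι → ℝ) :
    ‖∑ n ∈ s, c n • v n‖ ^ 2 ≤ ‖T‖ * ∑ n ∈ s, c n ^ 2 := by
  set u : ℓ²(ι) := ∑ n ∈ s, lp.single 2 n (c n)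
  have h_eq : ‖∑ n ∈ s, c n • v n‖ ^ 2 = ⟪u, T u⟫ := by
    simp only [u, ← real_inner_self_eq_norm_sq, sum_inner, inner_sum, lp.inner_single_left,
      hG.apply_sum_single, real_inner_smul_left, real_inner_smul_right, RCLike.inner_apply,
      conj_trivial, Finset.sum_mul]
    exact Finset.sum_congr rfl fun n _ => Finset.sum_congr rfl fun m _ => by
      rw [real_inner_comm]; ring
  calc ‖∑ n ∈ s, c n • v n‖ ^ 2 = ⟪u, T u⟫ := h_eq
    _ ≤ ‖u‖ * (‖T‖ * ‖u‖) := (real_inner_le_norm _ _).trans (by gcongr; exact T.le_opNorm u)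
    _ = ‖T‖ * ∑ n ∈ s, c n ^ 2 := by rw [← lp.norm_sum_single_sq]; ring

variable [CompleteSpace H]

lemma summable_smul (hG : IsGramOperator v T) (c : ℓ²(ι)) : Summable fun n => c n • v n := by
  have hc : Summable fun n => c n ^ 2 := by
    simpa [sq] using (lp.hasSum_inner (𝕜 := ℝ) c c).summable
  refine summable_iff_vanishing_norm.2 fun ε hε => ?_
  have hδ : 0 < ε ^ 2 / (‖T‖ + 1) := by positivity
  obtain ⟨s, hs⟩ := summable_iff_vanishing_norm.1 hc _ hδ
  refine ⟨s, fun t ht => lt_of_pow_lt_pow_left₀ 2 hε.le ?_⟩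
  have ht' : ∑ n ∈ t, c n ^ 2 < ε ^ 2 / (‖T‖ + 1) :=
    (Real.le_norm_self _).trans_lt (hs t ht)
  calc ‖∑ n ∈ t, c n • v n‖ ^ 2 ≤ ‖T‖ * ∑ n ∈ t, c n ^ 2 := hG.norm_sum_smul_sq_le t c
    _ ≤ (‖T‖ + 1) * ∑ n ∈ t, c n ^ 2 := by
        gcongr
        linarith
    _ < (‖T‖ + 1) * (ε ^ 2 / (‖T‖ + 1)) := by gcongr
    _ = ε ^ 2 := by field_simp

lemma norm_tsum_smul_le (hG : IsGramOperator v T) (c : ℓ²(ι)) :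
    ‖∑' n, c n • v n‖ ≤ √‖T‖ * ‖c‖ := by
  refine le_of_tendsto ((hG.summable_smul c).hasSum.norm) (.of_forall fun s => ?_)
  rw [← Real.sqrt_sq (norm_nonneg _), ← Real.sqrt_sq (norm_nonneg c),
    ← Real.sqrt_mul (norm_nonneg T)]
  gcongr
  exact (hG.norm_sum_smul_sq_le s c).trans (by gcongr; exact lp.sum_sq_le_norm_sq c s)

noncomputable def synthesis (hG : IsGramOperator v T) : ℓ²(ι) →L[ℝ] H :=
  LinearMap.mkContinuous
    { toFun := fun c => ∑' n, c n • v n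
      map_add' := fun c d => by
        simp only [lp.coeFn_add, Pi.add_apply, add_smul]
        exact (hG.summable_smul c).tsum_add (hG.summable_smul d)
      map_smul' := fun r c => by
        simp only [lp.coeFn_smul, Pi.smul_apply, smul_eq_mul, mul_smul, RingHom.id_apply]
        exact (hG.summable_smul c).tsum_const_smul r }
    √‖T‖ hG.norm_tsum_smul_le

lemma hasSum_synthesis (hG : IsGramOperator v T) (c : ℓ²(ι)) :
    HasSum (fun n => c n • v n) (hG.synthesis c) :=
  (hG.summable_smul c).hasSum

lemma synthesis_single (hG : IsGramOperator v T) (i : ι) :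
    hG.synthesis (lp.single 2 i 1) = v i := by
  refine (hG.hasSum_synthesis _).unique ?_
  convert hasSum_single (L := SummationFilter.unconditional ι) i fun m hm => ?_
  · simp
  · simp [hm]

lemma inner_synthesis_right (hG : IsGramOperator v T) (c : ℓ²(ι)) (j : ι) :
    ⟪v j, hG.synthesis c⟫ = T c j := by
  refine ((hG.hasSum_synthesis c).mapL (innerSL ℝ (v j))).unique ?_
  simpa only [innerSL_apply_apply, real_inner_smul_right, mul_comm] using hG c j

lemma inner_synthesis_synthesis (hG : IsGramOperator v T) (u w : ℓ²(ι)) :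
    ⟪hG.synthesis u, hG.synthesis w⟫ = ⟪T u, w⟫ := by
  refine ((hG.hasSum_synthesis w).mapL (innerSL ℝ (hG.synthesis u))).unique ?_
  simpa only [innerSL_apply_apply, real_inner_smul_right, real_inner_comm (v _),
    inner_synthesis_right, RCLike.inner_apply, conj_trivial, mul_comm] using
    lp.hasSum_inner (𝕜 := ℝ) (T u) w

lemma adjoint_comp_synthesis (hG : IsGramOperator v T) :
    hG.synthesis.adjoint ∘L hG.synthesis = T := by
  ext1 u
  refine ext_inner_right ℝ fun w => ?_
  rw [ContinuousLinearMap.comp_apply, ContinuousLinearMap.adjoint_inner_left,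
    hG.inner_synthesis_synthesis]

end

variable [CompleteSpace H] {T : ℓ²(ι) ≃L[ℝ] ℓ²(ι)}

lemma synthesis_hasLeftInverse (hG : IsGramOperator v (T : ℓ²(ι) →L[ℝ] ℓ²(ι))) :
    hG.synthesis.HasLeftInverse :=
  .of_comp (g := hG.synthesis.adjoint) <| by
    rw [hG.adjoint_comp_synthesis]
    exact T.hasLeftInverse

lemma range_synthesis (hG : IsGramOperator v (T : ℓ²(ι) →L[ℝ] ℓ²(ι))) :
    hG.synthesis.range = (Submodule.span ℝ (Set.range v)).topologicalClosure := by
  have hv : ∀ n, v n ∈ (Submodule.span ℝ (Set.range v)).topologicalClosure := fun n =>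
    Submodule.le_topologicalClosure _ (Submodule.subset_span ⟨n, rfl⟩)
  apply le_antisymm
  · rintro _ ⟨c, rfl⟩
    exact (Submodule.isClosed_topologicalClosure _).mem_of_tendsto (hG.hasSum_synthesis c)
      (.of_forall fun s => Submodule.sum_mem _ fun n _ => Submodule.smul_mem _ _ (hv n))
  · refine Submodule.topologicalClosure_minimal _ ?_ hG.synthesis_hasLeftInverse.isClosed_range
    rw [Submodule.span_le]
    rintro _ ⟨n, rfl⟩
    exact ⟨_, hG.synthesis_single n⟩

noncomputable def synthesisEquiv (hG : IsGramOperator v (T : ℓ²(ι) →L[ℝ] ℓ²(ι))) :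
    ℓ²(ι) ≃L[ℝ] (Submodule.span ℝ (Set.range v)).topologicalClosure :=
  (hG.synthesis.equivRange hG.synthesis_hasLeftInverse.injective
    hG.synthesis_hasLeftInverse.isClosed_range).trans (.ofEq _ _ hG.range_synthesis)

lemma coe_synthesisEquiv (hG : IsGramOperator v (T : ℓ²(ι) →L[ℝ] ℓ²(ι))) (c : ℓ²(ι)) :
    (hG.synthesisEquiv c : H) = hG.synthesis c :=
  rfl

noncomputable def dual (hG : IsGramOperator v (T : ℓ²(ι) →L[ℝ] ℓ²(ι))) (i : ι) : H :=
  hG.synthesis (T.symm (lp.single 2 i 1))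

lemma inner_synthesis_dual (hG : IsGramOperator v (T : ℓ²(ι) →L[ℝ] ℓ²(ι))) (c : ℓ²(ι)) (i : ι) :
    ⟪hG.synthesis c, hG.dual i⟫ = c i := by
  rw [dual, real_inner_comm, inner_synthesis_synthesis, ContinuousLinearEquiv.coe_coe,
    T.apply_symm_apply, lp.inner_single_left]
  simp

lemma inner_dual_right (hG : IsGramOperator v (T : ℓ²(ι) →L[ℝ] ℓ²(ι))) (j i : ι) :
    ⟪v j, hG.dual i⟫ = if j = i then 1 else 0 := by
  rw [← hG.synthesis_single j, inner_synthesis_dual, lp.single_apply, Pi.single_apply]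
  exact if_congr eq_comm rfl rfl

lemma inner_dual_dual (hG : IsGramOperator v (T : ℓ²(ι) →L[ℝ] ℓ²(ι))) (j i : ι) :
    ⟪hG.dual j, hG.dual i⟫ = T.symm (lp.single 2 i 1) j := by
  rw [real_inner_comm]
  exact hG.inner_synthesis_dual _ j

lemma isRieszBasisOf (hG : IsGramOperator v (T : ℓ²(ι) →L[ℝ] ℓ²(ι))) :
    IsRieszBasisOf (Submodule.span ℝ (Set.range v)).topologicalClosure v := by
  simpa only [coe_synthesisEquiv, synthesis_single] using isRieszBasisOf_of_equiv hG.synthesisEquiv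

lemma isRieszBasisOf_dual (hG : IsGramOperator v (T : ℓ²(ι) →L[ℝ] ℓ²(ι))) :
    IsRieszBasisOf (Submodule.span ℝ (Set.range v)).topologicalClosure hG.dual :=
  isRieszBasisOf_of_equiv (T.symm.trans hG.synthesisEquiv)

lemma exists_synthesis_eq (hG : IsGramOperator v (T : ℓ²(ι) →L[ℝ] ℓ²(ι))) {f : H}
    (hf : f ∈ (Submodule.span ℝ (Set.range v)).topologicalClosure) :
    ∃ c, hG.synthesis c = f :=
  LinearMap.mem_range.1 (hG.range_synthesis ▸ hf)

lemma hasSum_inner_dual_smul (hG : IsGramOperator v (T : ℓ²(ι) →L[ℝ] ℓ²(ι))) {f : H}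
    (hf : f ∈ (Submodule.span ℝ (Set.range v)).topologicalClosure) :
    HasSum (fun i => ⟪f, hG.dual i⟫ • v i) f := by
  obtain ⟨c, rfl⟩ := hG.exists_synthesis_eq hf
  simpa only [inner_synthesis_dual] using hG.hasSum_synthesis c

lemma hasSum_inner_smul_dual (hG : IsGramOperator v (T : ℓ²(ι) →L[ℝ] ℓ²(ι))) {f : H}
    (hf : f ∈ (Submodule.span ℝ (Set.range v)).topologicalClosure) :
    HasSum (fun i => ⟪f, v i⟫ • hG.dual i) f := by
  obtain ⟨c, rfl⟩ := hG.exists_synthesis_eq hf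
  have h := (hG.synthesis ∘L (T.symm : ℓ²(ι) →L[ℝ] ℓ²(ι))).hasSum_smul_apply_single (T c)
  simpa only [real_inner_comm (v _), inner_synthesis_right, ContinuousLinearMap.comp_apply,
    ContinuousLinearEquiv.coe_coe, T.symm_apply_apply, dual] using h

end IsGramOperator

end Gram

theorem stmt_14_general {d : ℕ}
    (K : EuclideanSpace ℝ (Fin d) → EuclideanSpace ℝ (Fin d) → ℝ)
    {H : Type*} [NormedAddCommGroup H] [InnerProductSpace ℝ H] [CompleteSpace H]
    (k : EuclideanSpace ℝ (Fin d) → H)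
    (hk : ∀ x y, ⟪k x, k y⟫ = K x y)
    (x : ℕ → EuclideanSpace ℝ (Fin d))
    -- X is determining: the infinite kernel matrix A_{K,X} acts as a bounded
    -- bijective operator T on ℓ²(ℕ)
    (T : lp (fun _ : ℕ => ℝ) 2 →L[ℝ] lp (fun _ : ℕ => ℝ) 2)
    (hTbij : Function.Bijective T)
    (hT : ∀ (c : lp (fun _ : ℕ => ℝ) 2) (j : ℕ),
      HasSum (fun m => K (x j) (x m) * c m) (T c j))
    (a : ℕ → lp (fun _ : ℕ => ℝ) 2) (ha : ∀ i, T (a i) = lp.single 2 i 1)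
    (L : ℕ → H) (hL : ∀ i, HasSum (fun m => a i m • k (x m)) (L i)) :
    IsRieszBasisOf ((Submodule.span ℝ (Set.range fun n => k (x n))).topologicalClosure)
      (fun n => k (x n)) ∧
    IsRieszBasisOf ((Submodule.span ℝ (Set.range fun n => k (x n))).topologicalClosure) L ∧
    (∀ j i, ⟪k (x j), L i⟫ = if j = i then 1 else 0) ∧
    (∀ f ∈ (Submodule.span ℝ (Set.range fun n => k (x n))).topologicalClosure,
      HasSum (fun i => ⟪f, L i⟫ • k (x i)) f ∧ HasSum (fun i => ⟪f, k (x i)⟫ • L i) f) ∧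
    (∀ j i, ⟪L j, L i⟫ = a i j) := by
  obtain ⟨T, rfl⟩ : T.IsInvertible :=
    ⟨.ofBijective T (LinearMap.ker_eq_bot.2 hTbij.1) (LinearMap.range_eq_top.2 hTbij.2),
      ContinuousLinearEquiv.coe_ofBijective _ _ _⟩
  have hG : IsGramOperator (fun n => k (x n)) (T : lp (fun _ : ℕ => ℝ) 2 →L[ℝ] _) := by
    simpa only [IsGramOperator, hk] using hT
  have ha' : ∀ i, a i = T.symm (lp.single 2 i 1) := fun i => T.eq_symm_apply.2 (ha i)
  obtain rfl : L = hG.dual := funext fun i => (hL i).unique (ha' i ▸ hG.hasSum_synthesis (a i))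
  refine ⟨hG.isRieszBasisOf, hG.isRieszBasisOf_dual, hG.inner_dual_right,
    fun f hf => ⟨hG.hasSum_inner_dual_smul hf, hG.hasSum_inner_smul_dual hf⟩, fun j i => ?_⟩
  rw [hG.inner_dual_dual, ha']

/-- (K(·,x_j)) and (L_k) are dual Riesz bases of H_{K,X}: both are Riesz bases,
they are biorthogonal, every f ∈ H_{K,X} has the two expansions
f = Σ ⟪f,L_k⟫ K(·,x_k) = Σ ⟪f,K(·,x_k)⟫ L_k, and the Gram matrix of (L_k)
is A_{K,X}⁻¹, i.e. ⟪L_j, L_i⟫ = (A_{K,X}⁻¹ e_i)_j. -/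
theorem stmt_14 {d : ℕ}
    (K : EuclideanSpace ℝ (Fin d) → EuclideanSpace ℝ (Fin d) → ℝ)
    (hK : IsPDKernel K)
    {H : Type*} [NormedAddCommGroup H] [InnerProductSpace ℝ H] [CompleteSpace H]
    (k : EuclideanSpace ℝ (Fin d) → H)
    (hk : ∀ x y, ⟪k x, k y⟫ = K x y)
    (hdense : (Submodule.span ℝ (Set.range k)).topologicalClosure = ⊤)
    (x : ℕ → EuclideanSpace ℝ (Fin d)) (hx : Function.Injective x)
    -- X is determining: the infinite kernel matrix A_{K,X} acts as a bounded
    -- bijective operator T on ℓ²(ℕ)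
    (T : lp (fun _ : ℕ => ℝ) 2 →L[ℝ] lp (fun _ : ℕ => ℝ) 2)
    (hTbij : Function.Bijective T)
    (hT : ∀ (c : lp (fun _ : ℕ => ℝ) 2) (j : ℕ),
      HasSum (fun m => K (x j) (x m) * c m) (T c j))
    (a : ℕ → lp (fun _ : ℕ => ℝ) 2) (ha : ∀ i, T (a i) = lp.single 2 i 1)
    (L : ℕ → H) (hL : ∀ i, HasSum (fun m => a i m • k (x m)) (L i)) :
    IsRieszBasisOf ((Submodule.span ℝ (Set.range fun n => k (x n))).topologicalClosure)
      (fun n => k (x n)) ∧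
    IsRieszBasisOf ((Submodule.span ℝ (Set.range fun n => k (x n))).topologicalClosure) L ∧
    (∀ j i, ⟪k (x j), L i⟫ = if j = i then 1 else 0) ∧
    (∀ f ∈ (Submodule.span ℝ (Set.range fun n => k (x n))).topologicalClosure,
      HasSum (fun i => ⟪f, L i⟫ • k (x i)) f ∧ HasSum (fun i => ⟪f, k (x i)⟫ • L i) f) ∧
    (∀ j i, ⟪L j, L i⟫ = a i j) :=
  stmt_14_general K k hk x T hTbij hT a ha L hL
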